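/- Ando-Hiai log-majorization consequence: for positive definite n×n matrices A, B and v ∈ [0,1], the product of the k largest eigenvalues satisfies ∏_{j=1}^k λ_j(A #_v B) ≤ ∏_{j=1}^k λ_j(A)^(1-v) λ_j(B)^v for each k = 1,…,n, with equality of the full products at k = n (i.e., det(A #_v B) = det(A)^(1-v) det(B)^v). -/

import Mathlib

/-!
Write `A = R²` with `R = A^(1/2)` and `C = R⁻¹ B R⁻¹ = V diag(μ) Vᵀ`, so that `A #_v B = R C^v R`.
For any `n × k` matrix `U`, put `N = Vᵀ R U`: the compressions `Uᴴ X U` of `X = A, B, A #_v B`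
are `Nᵀ diag(μ^r) N` for `r = 0, 1, v`, and by the Cauchy–Binet formula their determinants are
`∑_f w_f (∏_i μ_{f i})^r` with the same nonnegative weights `w_f = det(N_f)² / k!`. Hölder's
inequality therefore gives `det (Uᴴ (A #_v B) U) ≤ det (Uᴴ A U)^(1-v) det (Uᴴ B U)^v`.
If `U` is an isometry, the same expansion exhibits `det (Uᴴ X U)` as a convex combination of
products of `k` distinct eigenvalues of `X`, hence at most `∏_{j ≤ k} λ_j(X)`; and choosing for `U`
the top `k` eigenvectors of `A #_v B` turns the left-hand side into `∏_{j ≤ k} λ_j(A #_v B)`.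
-/

open scoped Matrix

/-- Weighted matrix geometric mean `A #_v B = A^(1/2) (A^(-1/2) B A^(-1/2))^v A^(1/2)`,
where real powers are taken via the continuous functional calculus. -/
noncomputable def mpow {m : ℕ} (A : Matrix (Fin m) (Fin m) ℝ) (r : ℝ) :
    Matrix (Fin m) (Fin m) ℝ :=
  cfc (fun x : ℝ => x ^ r) A

noncomputable def geomMean {m : ℕ} (v : ℝ) (A B : Matrix (Fin m) (Fin m) ℝ) :
    Matrix (Fin m) (Fin m) ℝ :=
  mpow A (1/2) * mpow (mpow A (-(1/2)) * B * mpow A (-(1/2))) v * mpow A (1/2)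

/-- The eigenvalues of a Hermitian matrix listed in decreasing order:
`sortedEigs hA 0 = λ₁` is the largest eigenvalue. -/
noncomputable def sortedEigs {m : ℕ} {A : Matrix (Fin m) (Fin m) ℝ}
    (hA : A.IsHermitian) : Fin m → ℝ :=
  fun i => (hA.eigenvalues ∘ Tuple.sort hA.eigenvalues) i.rev

open Matrix Finset

theorem Real.sum_mul_rpow_le_weight_mul_rpow {ι : Type*} (s : Finset ι) (w a : ι → ℝ)
    (hw : ∀ i, 0 ≤ w i) (ha : ∀ i, 0 ≤ a i) {v : ℝ} (hv₀ : 0 ≤ v) (hv₁ : v ≤ 1) :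
    ∑ i ∈ s, w i * a i ^ v ≤ (∑ i ∈ s, w i) ^ (1 - v) * (∑ i ∈ s, w i * a i) ^ v := by
  rcases hv₀.eq_or_lt with rfl | hv
  · simp
  have h := Real.inner_le_weight_mul_Lp_of_nonneg s (one_le_inv₀ hv |>.mpr hv₁) w
    (fun i => a i ^ v) hw fun i => Real.rpow_nonneg (ha i) v
  simpa only [inv_inv, ← Real.rpow_mul (ha _), mul_inv_cancel₀ hv.ne', Real.rpow_one] using h

namespace Matrix

variable {R : Type*} [CommRing R] {n k : ℕ}

theorem det_transpose_mul_diagonal_mul_eq_sum (X Y : Matrix (Fin n) (Fin k) R)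
    (w : Fin n → R) :
    (Xᵀ * diagonal w * Y).det =
      ∑ f : Fin k → Fin n, (∏ i, X (f i) i * w (f i)) * (Y.submatrix f id).det := by
  have hrows : Xᵀ * diagonal w * Y = fun i => ∑ r, (X r i * w r) • Y r := by
    ext i j
    simp [Matrix.mul_apply, diagonal_apply, Finset.sum_apply]
  show detRowAlternating _ = _
  rw [hrows, ← AlternatingMap.coe_multilinearMap, MultilinearMap.map_sum]
  refine Finset.sum_congr rfl fun f _ => ?_
  rw [MultilinearMap.map_smul_univ, smul_eq_mul]
  rfl

theorem cauchy_binet_diagonal (X Y : Matrix (Fin n) (Fin k) R) (w : Fin n → R) :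
    (k.factorial : R) * (Xᵀ * diagonal w * Y).det =
      ∑ f : Fin k → Fin n,
        (∏ i, w (f i)) * ((X.submatrix f id).det * (Y.submatrix f id).det) := by
  have hperm (f : Fin k → Fin n) :
      ∑ σ : Equiv.Perm (Fin k),
          (∏ i, X (f (σ i)) i * w (f (σ i))) * (Y.submatrix (f ∘ σ) id).det =
        (∏ i, w (f i)) * ((X.submatrix f id).det * (Y.submatrix f id).det) := by
    have hY (σ : Equiv.Perm (Fin k)) : (Y.submatrix (f ∘ σ) id).det =
        Equiv.Perm.sign σ * (Y.submatrix f id).det :=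
      det_permute σ (Y.submatrix f id)
    simp only [hY, prod_mul_distrib]
    rw [det_apply' (X.submatrix f id), Finset.sum_mul, Finset.mul_sum]
    refine Finset.sum_congr rfl fun σ _ => ?_
    rw [Equiv.prod_comp σ fun i => w (f i)]
    simp only [submatrix_apply, id]
    ring
  calc (k.factorial : R) * (Xᵀ * diagonal w * Y).det
      = ∑ _σ : Equiv.Perm (Fin k), (Xᵀ * diagonal w * Y).det := by
        simp [Fintype.card_perm]
    _ = ∑ σ : Equiv.Perm (Fin k), ∑ f : Fin k → Fin n,
          (∏ i, X (f (σ i)) i * w (f (σ i))) * (Y.submatrix (f ∘ σ) id).det := by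
        refine Finset.sum_congr rfl fun σ _ => ?_
        rw [det_transpose_mul_diagonal_mul_eq_sum]
        exact (Equiv.sum_comp (Equiv.arrowCongr σ.symm (Equiv.refl _)) _).symm
    _ = _ := by
        rw [Finset.sum_comm]
        exact Finset.sum_congr rfl fun f _ => hperm f

theorem det_transpose_mul_diagonal_mul_self_eq_sum (N : Matrix (Fin n) (Fin k) ℝ)
    (d : Fin n → ℝ) :
    (Nᵀ * diagonal d * N).det =
      ∑ f : Fin k → Fin n, (N.submatrix f id).det ^ 2 / k.factorial * ∏ i, d (f i) := by
  have hk : (k.factorial : ℝ) ≠ 0 := by positivity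
  rw [← mul_right_inj' hk, cauchy_binet_diagonal, Finset.mul_sum]
  refine Finset.sum_congr rfl fun f _ => ?_
  field_simp

theorem det_transpose_mul_self_eq_sum (N : Matrix (Fin n) (Fin k) ℝ) :
    (Nᵀ * N).det = ∑ f : Fin k → Fin n, (N.submatrix f id).det ^ 2 / k.factorial := by
  simpa [diagonal_one] using det_transpose_mul_diagonal_mul_self_eq_sum N 1

theorem det_transpose_mul_diagonal_rpow_mul_le (N : Matrix (Fin n) (Fin k) ℝ)
    {μ : Fin n → ℝ} (hμ : ∀ i, 0 ≤ μ i) {v : ℝ} (hv₀ : 0 ≤ v) (hv₁ : v ≤ 1) :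
    (Nᵀ * diagonal (fun i => μ i ^ v) * N).det ≤
      (Nᵀ * N).det ^ (1 - v) * (Nᵀ * diagonal μ * N).det ^ v := by
  simp only [det_transpose_mul_diagonal_mul_self_eq_sum, det_transpose_mul_self_eq_sum]
  calc _ = ∑ f : Fin k → Fin n,
        (N.submatrix f id).det ^ 2 / k.factorial * (∏ i, μ (f i)) ^ v := by
        simp only [Real.finsetProd_rpow _ _ fun i _ => hμ _]
    _ ≤ _ := Real.sum_mul_rpow_le_weight_mul_rpow _ _ _ (fun f => by positivity)
        (fun f => prod_nonneg fun i _ => hμ _) hv₀ hv₁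

end Matrix

theorem StrictMono.val_le_val_apply {k n : ℕ} {e : Fin k → Fin n} (he : StrictMono e)
    (j : Fin k) : (j : ℕ) ≤ e j := by
  have := Finset.card_le_card_of_injOn e (s := Finset.Iic j) (t := Finset.Iic (e j))
    (fun i hi => by simpa using he.monotone (by simpa using hi)) he.injective.injOn
  simpa using this

theorem Antitone.prod_comp_le_prod_castLE {k n : ℕ} {s : Fin n → ℝ} (hs : Antitone s)
    (hs₀ : ∀ i, 0 ≤ s i) {g : Fin k → Fin n} (hg : Function.Injective g) (hkn : k ≤ n) :
    ∏ i, s (g i) ≤ ∏ i, s (Fin.castLE hkn i) := by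
  classical
  set T := Finset.univ.image g
  have hT : T.card = k := by simp [T, Finset.card_image_of_injective _ hg]
  set e := T.orderEmbOfFin hT
  calc ∏ i, s (g i) = ∏ a ∈ T, s a := (Finset.prod_image fun a _ b _ h => hg h).symm
    _ = ∏ j, s (e j) := by
        rw [← T.image_orderEmbOfFin_univ hT, Finset.prod_image fun a _ b _ h => e.injective h]
    _ ≤ ∏ i, s (Fin.castLE hkn i) :=
        Finset.prod_le_prod (fun i _ => hs₀ _) fun j _ => hs (e.strictMono.val_le_val_apply j)

section SortedEigs

variable {m : ℕ} {X : Matrix (Fin m) (Fin m) ℝ}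

theorem sortedEigs_antitone (hX : X.IsHermitian) : Antitone (sortedEigs hX) :=
  fun _ _ hij => Tuple.monotone_sort hX.eigenvalues (Fin.rev_le_rev.mpr hij)

theorem exists_perm_sortedEigs_eq (hX : X.IsHermitian) :
    ∃ τ : Equiv.Perm (Fin m), sortedEigs hX = hX.eigenvalues ∘ τ :=
  ⟨Fin.revPerm.trans (Tuple.sort hX.eigenvalues), rfl⟩

theorem sortedEigs_nonneg (hX : X.PosSemidef) (i : Fin m) : 0 ≤ sortedEigs hX.1 i :=
  hX.eigenvalues_nonneg _

theorem prod_eigenvalues_comp_le_prod_sortedEigs (hX : X.PosSemidef) {k : ℕ} (hkm : k ≤ m)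
    {f : Fin k → Fin m} (hf : Function.Injective f) :
    ∏ i, hX.1.eigenvalues (f i) ≤ ∏ i, sortedEigs hX.1 (Fin.castLE hkm i) := by
  obtain ⟨τ, hτ⟩ := exists_perm_sortedEigs_eq hX.1
  have hs (i : Fin m) : sortedEigs hX.1 (τ.symm i) = hX.1.eigenvalues i := by simp [hτ]
  simp only [← hs]
  exact (sortedEigs_antitone hX.1).prod_comp_le_prod_castLE (sortedEigs_nonneg hX)
    (τ.symm.injective.comp hf) hkm

end SortedEigs

section MatrixPower

variable {m : ℕ} {X : Matrix (Fin m) (Fin m) ℝ}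

theorem mpow_eq (hX : X.IsHermitian) (r : ℝ) :
    mpow X r = (hX.eigenvectorUnitary : Matrix (Fin m) (Fin m) ℝ) *
      diagonal (fun i => hX.eigenvalues i ^ r) *
      (hX.eigenvectorUnitary : Matrix (Fin m) (Fin m) ℝ)ᴴ := by
  rw [mpow, hX.cfc_eq, IsHermitian.cfc]
  rfl

theorem isHermitian_mpow (X : Matrix (Fin m) (Fin m) ℝ) (r : ℝ) : (mpow X r).IsHermitian :=
  cfc_predicate _ X

theorem mpow_zero (hX : X.IsHermitian) : mpow X 0 = 1 := by
  simp only [mpow, Real.rpow_zero]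
  exact cfc_const_one ℝ X hX.isSelfAdjoint

theorem mpow_one (hX : X.IsHermitian) : mpow X 1 = X := by
  simp only [mpow, Real.rpow_one]
  exact cfc_id' ℝ X hX.isSelfAdjoint

theorem mpow_mul_mpow (hX : X.PosDef) (r s : ℝ) : mpow X r * mpow X s = mpow X (r + s) := by
  rw [mpow, mpow, mpow, ← cfc_mul _ _ X (X.finite_real_spectrum.continuousOn _)
    (X.finite_real_spectrum.continuousOn _)]
  refine cfc_congr fun x hx => ?_
  obtain ⟨i, rfl⟩ := hX.1.spectrum_real_eq_range_eigenvalues ▸ hx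
  exact (Real.rpow_add (hX.eigenvalues_pos i) r s).symm

theorem det_mpow (hX : X.PosSemidef) (r : ℝ) : (mpow X r).det = X.det ^ r := by
  rw [mpow, hX.1.cfc_eq, hX.1.det_eq_prod_eigenvalues]
  simp [IsHermitian.cfc, -Unitary.conjStarAlgAut_apply,
    Real.finsetProd_rpow _ _ fun i _ => hX.eigenvalues_nonneg i]

end MatrixPower

namespace Matrix

theorem conjTranspose_submatrix_mul_mul_submatrix {l m n α : Type*} [Fintype m]
    [NonUnitalSemiring α] [Star α] (V : Matrix m n α) (X : Matrix m m α) (f : l → n) :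
    (V.submatrix id f)ᴴ * X * V.submatrix id f = (Vᴴ * X * V).submatrix f f := by
  ext i j
  simp [Matrix.mul_apply, Finset.sum_mul]

theorem conjTranspose_mul_mul_conjTranspose_mul {m n k : Type*} [Fintype m] [Fintype n]
    (V : Matrix m n ℝ) (D : Matrix n n ℝ) (M : Matrix m k ℝ) :
    Mᴴ * (V * D * Vᴴ) * M = (Vᴴ * M)ᵀ * D * (Vᴴ * M) := by
  rw [← conjTranspose_eq_transpose_of_trivial, conjTranspose_mul, conjTranspose_conjTranspose]
  simp only [Matrix.mul_assoc]

end Matrix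

section Compression

variable {m k : ℕ} {X : Matrix (Fin m) (Fin m) ℝ}

theorem conjTranspose_mul_mpow_mul (hX : X.IsHermitian) (M : Matrix (Fin m) (Fin k) ℝ)
    (r : ℝ) :
    Mᴴ * mpow X r * M =
      ((hX.eigenvectorUnitary : Matrix (Fin m) (Fin m) ℝ)ᴴ * M)ᵀ *
        diagonal (fun i => hX.eigenvalues i ^ r) *
        ((hX.eigenvectorUnitary : Matrix (Fin m) (Fin m) ℝ)ᴴ * M) := by
  rw [mpow_eq hX, conjTranspose_mul_mul_conjTranspose_mul]

theorem Matrix.IsHermitian.exists_isometry_det_conj_eq_prod_sortedEigs (hX : X.IsHermitian)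
    (hkm : k ≤ m) :
    ∃ U : Matrix (Fin m) (Fin k) ℝ,
      Uᴴ * U = 1 ∧ (Uᴴ * X * U).det = ∏ i, sortedEigs hX (Fin.castLE hkm i) := by
  obtain ⟨τ, hτ⟩ := exists_perm_sortedEigs_eq hX
  set V := (hX.eigenvectorUnitary : Matrix (Fin m) (Fin m) ℝ)
  set f := τ ∘ Fin.castLE hkm
  have hf : Function.Injective f := τ.injective.comp (Fin.castLE_injective hkm)
  have hV : Vᴴ * V = 1 := Unitary.star_mul_self_of_mem hX.eigenvectorUnitary.2
  have hdiag : Vᴴ * X * V = diagonal hX.eigenvalues := by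
    simpa only [Unitary.conjStarAlgAut_star_apply, Unitary.coe_star, star_eq_conjTranspose,
      RCLike.ofReal_real_eq_id, Function.id_comp] using hX.conjStarAlgAut_star_eigenvectorUnitary
  refine ⟨V.submatrix id f, ?_, ?_⟩
  · simpa only [Matrix.mul_one, hV, submatrix_one _ hf] using
      conjTranspose_submatrix_mul_mul_submatrix V 1 f
  · rw [conjTranspose_submatrix_mul_mul_submatrix, hdiag, submatrix_diagonal _ _ hf,
      det_diagonal]
    simp [f, hτ]

theorem det_conjTranspose_mul_mul_le_prod_sortedEigs (hX : X.PosSemidef) (hkm : k ≤ m)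
    {U : Matrix (Fin m) (Fin k) ℝ} (hU : Uᴴ * U = 1) :
    (Uᴴ * X * U).det ≤ ∏ i, sortedEigs hX.1 (Fin.castLE hkm i) := by
  set V := (hX.1.eigenvectorUnitary : Matrix (Fin m) (Fin m) ℝ)
  set N := Vᴴ * U
  have hN : Nᵀ * N = 1 := by
    have hV : V * Vᴴ = 1 := Unitary.mul_star_self_of_mem hX.1.eigenvectorUnitary.2
    simpa only [Matrix.mul_one, hV, hU] using (conjTranspose_mul_mul_conjTranspose_mul V 1 U).symm
  set P := ∏ i, sortedEigs hX.1 (Fin.castLE hkm i)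
  rw [← mpow_one hX.1, conjTranspose_mul_mpow_mul]
  simp only [Real.rpow_one]
  rw [det_transpose_mul_diagonal_mul_self_eq_sum]
  calc _ ≤ ∑ f : Fin k → Fin m, (N.submatrix f id).det ^ 2 / k.factorial * P := by
        refine Finset.sum_le_sum fun f _ => ?_
        by_cases hf : Function.Injective f
        · exact mul_le_mul_of_nonneg_left
            (prod_eigenvalues_comp_le_prod_sortedEigs hX hkm hf) (by positivity)
        -- a repeated index gives two equal rows, so the weight vanishes
        obtain ⟨a, b, hab, hne⟩ := Function.not_injective_iff.mp hf
        rw [det_zero_of_row_eq hne (by ext; simp [hab])]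
        simp
    _ = P := by rw [← Finset.sum_mul, ← det_transpose_mul_self_eq_sum, hN, det_one, one_mul]

end Compression

section GeometricMean

variable {m k : ℕ} {A B : Matrix (Fin m) (Fin m) ℝ}

theorem Matrix.PosSemidef.mpow_mul_mul_mpow (hB : B.PosSemidef) (A : Matrix (Fin m) (Fin m) ℝ)
    (r : ℝ) : (mpow A r * B * mpow A r).PosSemidef := by
  simpa only [(isHermitian_mpow A r).eq] using hB.conjTranspose_mul_mul_same (mpow A r)

theorem det_conjTranspose_mul_geomMean_mul_le (hA : A.PosDef) (hB : B.PosSemidef) {v : ℝ}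
    (hv₀ : 0 ≤ v) (hv₁ : v ≤ 1) (U : Matrix (Fin m) (Fin k) ℝ) :
    (Uᴴ * geomMean v A B * U).det ≤ (Uᴴ * A * U).det ^ (1 - v) * (Uᴴ * B * U).det ^ v := by
  set R := mpow A (1/2)
  set S := mpow A (-(1/2))
  set C := S * B * S
  have hC : C.PosSemidef := hB.mpow_mul_mul_mpow A _
  have hRR : R * R = A := by rw [mpow_mul_mpow hA]; norm_num [mpow_one hA.1]
  have hRS : R * S = 1 := by rw [mpow_mul_mpow hA]; norm_num [mpow_zero hA.1]
  have hSR : S * R = 1 := by rw [mpow_mul_mpow hA]; norm_num [mpow_zero hA.1]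
  set N := (hC.1.eigenvectorUnitary : Matrix (Fin m) (Fin m) ℝ)ᴴ * (R * U)
  have hcompr (r : ℝ) :
      Uᴴ * (R * mpow C r * R) * U = Nᵀ * diagonal (fun i => hC.1.eigenvalues i ^ r) * N := by
    have hR : Rᴴ = R := isHermitian_mpow A _
    rw [← conjTranspose_mul_mpow_mul hC.1, conjTranspose_mul, hR]
    simp only [Matrix.mul_assoc]
  have hNA : Nᵀ * N = Uᴴ * A * U := by
    simpa [mpow_zero hC.1, hRR] using (hcompr 0).symm
  have hNB : Nᵀ * diagonal hC.1.eigenvalues * N = Uᴴ * B * U := by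
    have hRCR : R * C * R = B := by
      simp only [C, ← Matrix.mul_assoc, hRS, Matrix.one_mul]
      rw [Matrix.mul_assoc, hSR, Matrix.mul_one]
    simpa [mpow_one hC.1, hRCR] using (hcompr 1).symm
  rw [← hNA, ← hNB, geomMean, hcompr v]
  exact det_transpose_mul_diagonal_rpow_mul_le N hC.eigenvalues_nonneg hv₀ hv₁

theorem det_geomMean (hA : A.PosDef) (hB : B.PosSemidef) (v : ℝ) :
    (geomMean v A B).det = A.det ^ (1 - v) * B.det ^ v := by
  have hx := hA.det_pos
  have hy := hB.det_nonneg
  rw [geomMean, det_mul, det_mul, det_mpow (hB.mpow_mul_mul_mpow A _), det_mul,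
    det_mul, det_mpow hA.posSemidef, det_mpow hA.posSemidef]
  set x := A.det
  have hxx : x ^ (1/2 : ℝ) * x ^ (1/2 : ℝ) = x := by
    rw [← Real.rpow_add hx]; norm_num
  have hconj : x ^ (-(1/2) : ℝ) * B.det * x ^ (-(1/2) : ℝ) = x⁻¹ * B.det := by
    rw [mul_right_comm, ← Real.rpow_add hx]; norm_num [Real.rpow_neg_one]
  rw [hconj, Real.mul_rpow (inv_nonneg.mpr hx.le) hy, Real.inv_rpow hx.le, Real.rpow_sub hx,
    Real.rpow_one]
  calc x ^ (1/2 : ℝ) * ((x ^ v)⁻¹ * B.det ^ v) * x ^ (1/2 : ℝ)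
      = (x ^ (1/2 : ℝ) * x ^ (1/2 : ℝ)) * (x ^ v)⁻¹ * B.det ^ v := by ring
    _ = x / x ^ v * B.det ^ v := by rw [hxx, div_eq_mul_inv]

end GeometricMean

theorem Finset.prod_filter_val_lt_eq_prod_castLE {M : Type*} [CommMonoid M] {n k : ℕ}
    (hkn : k ≤ n) (f : Fin n → M) :
    ∏ j ∈ Finset.univ.filter (fun j : Fin n => (j : ℕ) < k), f j =
      ∏ i : Fin k, f (Fin.castLE hkn i) :=
  Finset.prod_bij' (fun j hj => ⟨j, (Finset.mem_filter.mp hj).2⟩)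
    (fun i _ => Fin.castLE hkn i) (by simp) (by simp) (by simp) (by simp) (by simp)

/-- Ando–Hiai log-majorization: `∏_{j=1}^k λ_j(A #_v B) ≤ ∏_{j=1}^k λ_j(A)^(1-v) λ_j(B)^v`
for each `k`, with equality of determinants at `k = n`:
`det (A #_v B) = det A ^ (1-v) * det B ^ v`. -/
theorem andoHiai_logMajorization {n : ℕ} (A B : Matrix (Fin n) (Fin n) ℝ)
    (hA : A.PosDef) (hB : B.PosDef) (v : ℝ) (hv : v ∈ Set.Icc (0 : ℝ) 1)
    (hG : (geomMean v A B).IsHermitian) :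
    (∀ k : ℕ, k ≤ n →
      ∏ j ∈ Finset.univ.filter (fun j : Fin n => (j : ℕ) < k), sortedEigs hG j ≤
      ∏ j ∈ Finset.univ.filter (fun j : Fin n => (j : ℕ) < k),
        sortedEigs hA.1 j ^ (1 - v) * sortedEigs hB.1 j ^ v) ∧
    (geomMean v A B).det = A.det ^ (1 - v) * B.det ^ v := by
  obtain ⟨hv₀, hv₁⟩ := hv
  refine ⟨fun k hkn => ?_, det_geomMean hA hB.posSemidef v⟩
  obtain ⟨U, hU, hGU⟩ := hG.exists_isometry_det_conj_eq_prod_sortedEigs hkn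
  simp only [Finset.prod_filter_val_lt_eq_prod_castLE hkn, Finset.prod_mul_distrib,
    Real.finsetProd_rpow _ _ fun i _ => sortedEigs_nonneg hA.posSemidef _,
    Real.finsetProd_rpow _ _ fun i _ => sortedEigs_nonneg hB.posSemidef _]
  rw [← hGU]
  calc (Uᴴ * geomMean v A B * U).det
      ≤ (Uᴴ * A * U).det ^ (1 - v) * (Uᴴ * B * U).det ^ v :=
        det_conjTranspose_mul_geomMean_mul_le hA hB.posSemidef hv₀ hv₁ U
    _ ≤ _ := by
        have hAU := (hA.posSemidef.conjTranspose_mul_mul_same U).det_nonneg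
        have hBU := (hB.posSemidef.conjTranspose_mul_mul_same U).det_nonneg
        have hPA := Finset.prod_nonneg fun i (_ : i ∈ Finset.univ) =>
          sortedEigs_nonneg hA.posSemidef (Fin.castLE hkn i)
        gcongr
        · exact det_conjTranspose_mul_mul_le_prod_sortedEigs hA.posSemidef hkn hU
        · exact det_conjTranspose_mul_mul_le_prod_sortedEigs hB.posSemidef hkn hU
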